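/- arXiv:1604.07629 — 3 statements merged into one kernel-verified Lean document; each statement's English description precedes it below -/
import Mathlib

section
/- Let α ∈ ℂ, let A, X be complex p×q matrices with range(A) ⊆ range(X) and null(A) ⊆ null(X), and let z ∈ ℂ with z ≠ α. Then the matrix −(z−α)A⁺X + I_q − A⁺A is invertible, and its inverse equals −(z−α)^{-1}X⁺A + I_q − A⁺A. -/
open Matrix

/-- `Ap` is the Moore-Penrose inverse of `A`. -/
def IsMoorePenrose {p q : ℕ} (A : Matrix (Fin p) (Fin q) ℂ)
    (Ap : Matrix (Fin q) (Fin p) ℂ) : Prop :=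
  A * Ap * A = A ∧ Ap * A * Ap = Ap ∧ (A * Ap)ᴴ = A * Ap ∧ (Ap * A)ᴴ = Ap * A

/-!
With `P = A⁺A`, `B = A⁺X` and `C = X⁺A`, the range condition gives `XX⁺A = A` and the kernel
condition gives `XA⁺A = X`. From these, `P² = P`, `BP = B` and `BC = P`; and `PC = C` because
`X⁺X · P = X⁺X` with both factors Hermitian, so `P · X⁺X = X⁺X` by taking adjoints.
In any algebra these four identities alone make `c⁻¹C + 1 - P` a right inverse of `cB + 1 - P`
for every scalar `c ≠ 0`.
-/

namespace Matrix

variable {R : Type*} [CommRing R] {m n k : Type*} [Fintype m] [Fintype n]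

theorem mul_mul_eq_right_of_range_le [Fintype k] {A : Matrix m n R} {X : Matrix m k R}
    {Xp : Matrix k m R} (hX : X * Xp * X = X)
    (hran : LinearMap.range A.mulVecLin ≤ LinearMap.range X.mulVecLin) :
    X * Xp * A = A := by
  refine ext_iff_mulVec.2 fun v => ?_
  obtain ⟨w, hw⟩ := hran ⟨v, rfl⟩
  simp only [mulVecLin_apply] at hw
  rw [← mulVec_mulVec, ← hw, mulVec_mulVec, hX]

theorem mul_mul_eq_left_of_ker_le {A : Matrix m n R} {Ap : Matrix n m R} {X : Matrix k n R}
    (hA : A * Ap * A = A) (hker : LinearMap.ker A.mulVecLin ≤ LinearMap.ker X.mulVecLin) :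
    X * Ap * A = X := by
  refine ext_iff_mulVec.2 fun v => ?_
  have hA0 : A *ᵥ (v - (Ap * A) *ᵥ v) = 0 := by
    rw [mulVec_sub, mulVec_mulVec, ← Matrix.mul_assoc, hA, sub_self]
  have hX0 : X *ᵥ (v - (Ap * A) *ᵥ v) = 0 := hker hA0
  rw [mulVec_sub, mulVec_mulVec, sub_eq_zero] at hX0
  rw [Matrix.mul_assoc, hX0]

end Matrix

theorem IsSelfAdjoint.mul_eq_right_of_mul_eq_left {R : Type*} [Mul R] [StarMul R] {P Q : R}
    (hP : IsSelfAdjoint P) (hQ : IsSelfAdjoint Q) (h : Q * P = Q) : P * Q = Q := by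
  rw [← hP.star_eq, ← hQ.star_eq, ← star_mul, h]

theorem smul_add_one_sub_mul_inv_smul_add_one_sub {K R : Type*} [Field K] [Ring R]
    [Algebra K R] {P B C : R} {c : K} (hc : c ≠ 0) (hP : P * P = P) (hBP : B * P = B)
    (hPC : P * C = C) (hBC : B * C = P) : (c • B + 1 - P) * (c⁻¹ • C + 1 - P) = 1 := by
  simp only [add_mul, sub_mul, mul_add, mul_sub, smul_mul_assoc, mul_smul_comm, smul_add,
    smul_sub, inv_smul_smul₀ hc, one_mul, mul_one, hP, hBP, hPC, hBC]
  abel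

theorem stmt5 {p q : ℕ} (α : ℂ) (A X : Matrix (Fin p) (Fin q) ℂ)
    (Ap Xp : Matrix (Fin q) (Fin p) ℂ)
    (hA : IsMoorePenrose A Ap) (hX : IsMoorePenrose X Xp)
    (hran : LinearMap.range A.mulVecLin ≤ LinearMap.range X.mulVecLin)
    (hker : LinearMap.ker A.mulVecLin ≤ LinearMap.ker X.mulVecLin)
    (z : ℂ) (hz : z ≠ α) :
    IsUnit ((-(z - α)) • (Ap * X) + 1 - Ap * A) ∧
    ((-(z - α)) • (Ap * X) + 1 - Ap * A)⁻¹ = (-(z - α)⁻¹) • (Xp * A) + 1 - Ap * A := by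
  obtain ⟨hAApA, hApAAp, -, hApA⟩ := hA
  obtain ⟨hXXpX, -, -, hXpX⟩ := hX
  have hXXpA : X * Xp * A = A := mul_mul_eq_right_of_range_le hXXpX hran
  have hXApA : X * Ap * A = X := mul_mul_eq_left_of_ker_le hAApA hker
  have hXpXApA : Ap * A * (Xp * X) = Xp * X :=
    IsSelfAdjoint.mul_eq_right_of_mul_eq_left hApA hXpX <| by
      rw [Matrix.mul_assoc, ← Matrix.mul_assoc X, hXApA]
  have hXpXXpA : Xp * X * (Xp * A) = Xp * A := by
    rw [Matrix.mul_assoc, ← Matrix.mul_assoc X, hXXpA]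
  have key : ((-(z - α)) • (Ap * X) + 1 - Ap * A) *
      ((-(z - α)⁻¹) • (Xp * A) + 1 - Ap * A) = 1 := by
    rw [neg_inv]
    refine smul_add_one_sub_mul_inv_smul_add_one_sub (neg_ne_zero.2 (sub_ne_zero.2 hz))
      ?_ ?_ ?_ ?_
    · rw [← Matrix.mul_assoc, hApAAp]
    · rw [Matrix.mul_assoc, ← Matrix.mul_assoc X, hXApA]
    · calc Ap * A * (Xp * A) = Ap * A * (Xp * X) * (Xp * A) := by
            rw [Matrix.mul_assoc _ (Xp * X), hXpXXpA]
        _ = Xp * A := by rw [hXpXApA, hXpXXpA]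
    · rw [Matrix.mul_assoc, ← Matrix.mul_assoc X, hXXpA]
  exact ⟨IsUnit.of_mul_eq_one _ key, inv_eq_right_inv key⟩
end

section
/- Let A and X be complex p×q matrices with range(A) ⊆ range(X) and null(A) ⊆ null(X), let α ∈ ℝ and z ∈ ℂ with z ≠ α. Set Y = −A(I_q + (z−α)^{-1}X⁺A). Then the matrix −(z−α)^{-1}X⁺A + I_q − A⁺A is invertible with inverse −(z−α)A⁺X + I_q − A⁺A, and −(z−α)^{-1}·A·(I_q + A⁺Y)^{-1} = X. (I.e., applying first the Schur–Stieltjes-type transform and then its inverse transform recovers X.) -/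
open Matrix

/-!
Write `w = z - α`, `P = A⁺A`, `U = A⁺X` and `V = X⁺A`. The range and null space hypotheses
give `XX⁺A = A`, `XP = X` and, by counting dimensions, `AA⁺X = X`; self-adjointness of `P` and
`X⁺X` turns `X⁺X P = X⁺X` into `P X⁺ = X⁺`. Hence `UV = P`, `UP = U`, `PV = V`, `P² = P`,
and these four identities alone make `(1 - P - wU)(1 - P - w⁻¹V) = 1`. Since `I_q + A⁺Y` is
exactly `1 - P - w⁻¹V`, we get `A (I_q + A⁺Y)⁻¹ = A (1 - P - wU) = -wX`.
-/

namespace Matrix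

variable {K : Type*} [Field K] {m n : Type*} [Fintype n]

theorem range_mulVecLin_eq_of_le_of_ker_le {A X : Matrix m n K}
    (hran : LinearMap.range A.mulVecLin ≤ LinearMap.range X.mulVecLin)
    (hker : LinearMap.ker A.mulVecLin ≤ LinearMap.ker X.mulVecLin) :
    LinearMap.range A.mulVecLin = LinearMap.range X.mulVecLin := by
  have hA := A.mulVecLin.finrank_range_add_finrank_ker
  have hX := X.mulVecLin.finrank_range_add_finrank_ker
  have := Submodule.finrank_mono hran
  have := Submodule.finrank_mono hker
  exact Submodule.eq_of_le_of_finrank_eq hran (by omega)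

variable [Fintype m]

theorem mul_mul_eq_of_range_le {A X : Matrix m n K} {Xp : Matrix n m K}
    (hX : X * Xp * X = X) (hran : LinearMap.range A.mulVecLin ≤ LinearMap.range X.mulVecLin) :
    X * Xp * A = A := by
  refine ext_iff_mulVec.mpr fun v => ?_
  obtain ⟨u, hu⟩ := hran (LinearMap.mem_range_self A.mulVecLin v)
  simp only [mulVecLin_apply] at hu
  rw [← mulVec_mulVec, ← hu, mulVec_mulVec, hX]

theorem mul_mul_eq_of_ker_le {A X : Matrix m n K} {Ap : Matrix n m K}
    (hA : A * Ap * A = A) (hker : LinearMap.ker A.mulVecLin ≤ LinearMap.ker X.mulVecLin) :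
    X * (Ap * A) = X := by
  refine ext_iff_mulVec.mpr fun v => ?_
  have hv : (Ap * A) *ᵥ v - v ∈ LinearMap.ker A.mulVecLin := by
    rw [LinearMap.mem_ker, map_sub, mulVecLin_apply, mulVecLin_apply, mulVec_mulVec,
      ← Matrix.mul_assoc, hA, sub_self]
  have hXv := hker hv
  rw [LinearMap.mem_ker, map_sub, mulVecLin_apply, mulVecLin_apply, sub_eq_zero] at hXv
  rw [← mulVec_mulVec, hXv]

end Matrix

theorem IsSelfAdjoint.mul_eq_of_mul_eq {R : Type*} [Monoid R] [StarMul R] {P Q : R}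
    (hP : IsSelfAdjoint P) (hQ : IsSelfAdjoint Q) (h : Q * P = Q) : P * Q = Q := by
  simpa only [star_mul, hP.star_eq, hQ.star_eq] using congrArg star h

theorem neg_smul_add_one_sub_mul_neg_inv_smul_add_one_sub {𝕜 R : Type*} [Field 𝕜] [Ring R]
    [Algebra 𝕜 R] {P U V : R} {w : 𝕜} (hw : w ≠ 0)
    (hUV : U * V = P) (hUP : U * P = U) (hPV : P * V = V) (hP : IsIdempotentElem P) :
    ((-w) • U + 1 - P) * ((-w⁻¹) • V + 1 - P) = 1 := by
  simp only [sub_mul, mul_sub, add_mul, mul_add, smul_mul_assoc, mul_smul_comm, one_mul,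
    mul_one, hUV, hUP, hPV, hP.eq]
  match_scalars <;> field_simp <;> ring

namespace IsMoorePenrose

variable {p q : ℕ} {A X : Matrix (Fin p) (Fin q) ℂ} {Ap Xp : Matrix (Fin q) (Fin p) ℂ}

theorem isIdempotentElem_pinv_mul (hA : IsMoorePenrose A Ap) : IsIdempotentElem (Ap * A) := by
  unfold IsIdempotentElem
  rw [Matrix.mul_assoc, ← Matrix.mul_assoc A, hA.1]

theorem pinv_mul_mul_pinv_eq_of_ker_le (hA : IsMoorePenrose A Ap) (hX : IsMoorePenrose X Xp)
    (hker : LinearMap.ker A.mulVecLin ≤ LinearMap.ker X.mulVecLin) :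
    Ap * A * Xp = Xp := by
  have hXA : Xp * X * (Ap * A) = Xp * X := by
    rw [Matrix.mul_assoc, mul_mul_eq_of_ker_le hA.1 hker]
  have hAX : Ap * A * (Xp * X) = Xp * X :=
    IsSelfAdjoint.mul_eq_of_mul_eq hA.2.2.2 hX.2.2.2 hXA
  calc Ap * A * Xp = Ap * A * (Xp * X) * Xp := by rw [Matrix.mul_assoc _ (Xp * X), hX.2.1]
    _ = Xp := by rw [hAX, hX.2.1]

end IsMoorePenrose

theorem stmt9 {p q : ℕ} (A X : Matrix (Fin p) (Fin q) ℂ)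
    (Ap Xp : Matrix (Fin q) (Fin p) ℂ)
    (hA : IsMoorePenrose A Ap) (hX : IsMoorePenrose X Xp)
    (hran : LinearMap.range A.mulVecLin ≤ LinearMap.range X.mulVecLin)
    (hker : LinearMap.ker A.mulVecLin ≤ LinearMap.ker X.mulVecLin)
    (α : ℝ) (z : ℂ) (hz : z ≠ (α : ℂ)) :
    IsUnit ((-(z - (α : ℂ))⁻¹) • (Xp * A) + 1 - Ap * A) ∧
    ((-(z - (α : ℂ))⁻¹) • (Xp * A) + 1 - Ap * A)⁻¹
        = (-(z - (α : ℂ))) • (Ap * X) + 1 - Ap * A ∧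
    (-(z - (α : ℂ))⁻¹) •
        (A * (1 + Ap * (-(A * (1 + (z - (α : ℂ))⁻¹ • (Xp * A)))))⁻¹) = X := by
  have hw : z - (α : ℂ) ≠ 0 := sub_ne_zero.mpr hz
  set w := z - (α : ℂ)
  have hUV : Ap * X * (Xp * A) = Ap * A := by
    rw [Matrix.mul_assoc, ← Matrix.mul_assoc X, mul_mul_eq_of_range_le hX.1 hran]
  have hUP : Ap * X * (Ap * A) = Ap * X := by
    rw [Matrix.mul_assoc, mul_mul_eq_of_ker_le hA.1 hker]
  have hPV : Ap * A * (Xp * A) = Xp * A := by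
    rw [← Matrix.mul_assoc, hA.pinv_mul_mul_pinv_eq_of_ker_le hX hker]
  have hinv := neg_smul_add_one_sub_mul_neg_inv_smul_add_one_sub hw hUV hUP hPV
    hA.isIdempotentElem_pinv_mul
  have hAAX : A * Ap * X = X :=
    mul_mul_eq_of_range_le hA.1 (range_mulVecLin_eq_of_le_of_ker_le hran hker).ge
  have hB : 1 + Ap * (-(A * (1 + w⁻¹ • (Xp * A)))) = (-w⁻¹) • (Xp * A) + 1 - Ap * A := by
    rw [Matrix.mul_neg, Matrix.mul_add, Matrix.mul_one, Matrix.mul_smul, Matrix.mul_add,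
      Matrix.mul_smul, ← Matrix.mul_assoc Ap A, hPV]
    module
  refine ⟨.of_mul_eq_one_right _ hinv, inv_eq_left_inv hinv, ?_⟩
  rw [hB, inv_eq_left_inv hinv, Matrix.mul_sub, Matrix.mul_add, Matrix.mul_smul,
    ← Matrix.mul_assoc, hAAX, Matrix.mul_one, ← Matrix.mul_assoc, hA.1, add_sub_cancel_right,
    smul_smul, neg_mul_neg, inv_mul_cancel₀ hw, one_smul]
end

section
/- Let Ω be a nonempty closed subset of ℝ with inf{|inf Ω|, |sup Ω|} < ∞, let m ≥ 1, let s₀,…,s_{m−1} be complex q×q matrices, let s_m be a Hermitian q×q matrix, and let σ be a finite nonnegative Hermitian q×q measure on Ω whose moments satisfy ∫_Ω t^j dσ(t) = s_j for j = 0,…,m−1. If the Stieltjes transform S(w) = ∫_Ω (t−w)^{-1} dσ(t) satisfies lim_{y→∞} (iy)^{m+1}[S(iy) + Σ_{j=0}^{m} (iy)^{-(j+1)}s_j] = 0, then t^m is σ-integrable and ∫_Ω t^m dσ(t) = s_m. -/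
/-!
For `y > 0` the moment conditions `∫ tʲ dσ = sⱼ` (`j < m`) turn the hypothesis into
`∫ iy tᵐ / (t - iy) dσ(t) → -sₘ` as `y → ∞`. The Hermitian part of this integral is
`-∫ g_y dσ` with `g_y(t) = y² tᵐ / (t² + y²)`, so `∫ g_y dσ → sₘ`. As `Ω` is bounded on one side,
`|t|ᵐ ≤ ±tᵐ + C` on `Ω`; for the nonnegative diagonal entries of `σ` this bounds
`∫ y² |t|ᵐ / (t² + y²) dσᵢᵢ` uniformly in `y`, so by Fatou's lemma `tᵐ` is integrable against the
trace of `σ`, which dominates every entry. Dominated convergence then gives `∫ tᵐ dσ = sₘ`.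
-/

open Matrix MeasureTheory Filter
open scoped ComplexOrder

attribute [local instance] Matrix.normedAddCommGroup Matrix.normedSpace

open Topology

lemma pow_succ_mul_inv_sub_add_sum {w t : ℂ} (hw : w ≠ 0) (htw : t - w ≠ 0) (m : ℕ) :
    w ^ (m + 1) * ((t - w)⁻¹ + ∑ j ∈ Finset.range m, w ^ (-(j + 1 : ℤ)) * t ^ j)
      = w * t ^ m / (t - w) := by
  have hgeom : ∑ j ∈ Finset.range m, t ^ j * w ^ (m - 1 - j) = (t ^ m - w ^ m) / (t - w) := by
    rw [eq_div_iff htw]; exact geom_sum₂_mul t w m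
  have hterm : ∀ j ∈ Finset.range m,
      w ^ (m + 1) * (w ^ (-(j + 1 : ℤ)) * t ^ j) = t ^ j * w ^ (m - 1 - j) * w := by
    intro j hj
    have hpow : w ^ (m + 1) = w ^ (m - 1 - j) * w * w ^ (j + 1) := by
      rw [mul_assoc, ← pow_succ', ← pow_add]
      congr 1
      have := Finset.mem_range.mp hj
      omega
    rw [hpow, _root_.zpow_neg, show (j : ℤ) + 1 = ((j + 1 : ℕ) : ℤ) by push_cast; ring,
      zpow_natCast]
    field_simp
  rw [mul_add, Finset.mul_sum, Finset.sum_congr rfl hterm, ← Finset.sum_mul, hgeom]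
  field_simp
  ring

lemma ofReal_sub_ne_zero_of_im_ne_zero {w : ℂ} (hw : w.im ≠ 0) (t : ℝ) : (t : ℂ) - w ≠ 0 := by
  intro h
  apply hw
  simpa using congrArg Complex.im h

section Resolvent

variable {E : Type*} [NormedAddCommGroup E] [NormedSpace ℂ E] {μ : Measure ℝ}

lemma integrable_inv_sub_smul {D : ℝ → E} (hD : Integrable D μ) {w : ℂ} (hw : w.im ≠ 0) :
    Integrable (fun t : ℝ => ((t : ℂ) - w)⁻¹ • D t) μ := by
  refine (hD.norm.const_mul |w.im|⁻¹).mono' ?_ (ae_of_all _ fun t => ?_)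
  · exact ((Complex.continuous_ofReal.sub continuous_const).inv₀
      (ofReal_sub_ne_zero_of_im_ne_zero hw)).aestronglyMeasurable.smul hD.aestronglyMeasurable
  · rw [norm_smul, norm_inv]
    gcongr
    calc |w.im| = |((t : ℂ) - w).im| := by simp
      _ ≤ ‖(t : ℂ) - w‖ := Complex.abs_im_le_norm _

lemma integrable_and_integral_mul_pow_div_sub_smul [CompleteSpace E] {D : ℝ → E} {m : ℕ}
    {s : ℕ → E} (hD : Integrable D μ) (hint : ∀ j < m, Integrable (fun t : ℝ => t ^ j • D t) μ)
    (hmom : ∀ j < m, ∫ t, t ^ j • D t ∂μ = s j) {w : ℂ} (hw : w.im ≠ 0) :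
    Integrable (fun t : ℝ => (w * (t : ℂ) ^ m / (t - w)) • D t) μ ∧
      ∫ t, (w * (t : ℂ) ^ m / (t - w)) • D t ∂μ + s m
        = w ^ (m + 1) • ((∫ t, ((t : ℂ) - w)⁻¹ • D t ∂μ)
          + ∑ j ∈ Finset.range (m + 1), w ^ (-(j + 1 : ℤ)) • s j) := by
  have hw0 : w ≠ 0 := fun h => hw (by simp [h])
  have hres : Integrable (fun t : ℝ => w ^ (m + 1) • ((t : ℂ) - w)⁻¹ • D t) μ :=
    (integrable_inv_sub_smul hD hw).smul _
  have hmoms : ∀ j ∈ Finset.range m, Integrable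
      (fun t : ℝ => (w ^ (m + 1) * w ^ (-(j + 1 : ℤ))) • t ^ j • D t) μ :=
    fun j hj => (hint j (Finset.mem_range.mp hj)).smul _
  have hsplit : ∀ t : ℝ, (w * (t : ℂ) ^ m / (t - w)) • D t
      = w ^ (m + 1) • ((t : ℂ) - w)⁻¹ • D t
        + ∑ j ∈ Finset.range m, (w ^ (m + 1) * w ^ (-(j + 1 : ℤ))) • t ^ j • D t := by
    intro t
    rw [← pow_succ_mul_inv_sub_add_sum hw0 (ofReal_sub_ne_zero_of_im_ne_zero hw t), mul_add,
      Finset.mul_sum, add_smul, Finset.sum_smul, smul_smul]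
    congr 1
    refine Finset.sum_congr rfl fun j _ => ?_
    rw [← Complex.coe_smul, smul_smul]
    push_cast
    ring_nf
  have hint' : Integrable (fun t : ℝ => (w * (t : ℂ) ^ m / (t - w)) • D t) μ :=
    (hres.add (integrable_finsetSum _ hmoms)).congr (ae_of_all _ fun t => (hsplit t).symm)
  refine ⟨hint', ?_⟩
  have hpow : w ^ (m + 1) * w ^ (-(m + 1 : ℤ)) = 1 := by
    rw [_root_.zpow_neg, show (m : ℤ) + 1 = ((m + 1 : ℕ) : ℤ) by push_cast; ring, zpow_natCast,
      mul_inv_cancel₀ (pow_ne_zero _ hw0)]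
  rw [funext hsplit, integral_add hres (integrable_finsetSum _ hmoms), integral_finsetSum _ hmoms,
    integral_smul, Finset.sum_range_succ, smul_add, smul_add, smul_smul, hpow, one_smul,
    Finset.smul_sum, ← add_assoc]
  congr 2
  refine Finset.sum_congr rfl fun j hj => ?_
  rw [integral_smul, hmom j (Finset.mem_range.mp hj), smul_smul]

end Resolvent

noncomputable def resolventWeight (y t : ℝ) : ℝ := y ^ 2 / (t ^ 2 + y ^ 2)

lemma resolventWeight_nonneg (y t : ℝ) : 0 ≤ resolventWeight y t := by
  unfold resolventWeight; positivity

lemma resolventWeight_le_one (y t : ℝ) : resolventWeight y t ≤ 1 :=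
  div_le_one_of_le₀ (le_add_of_nonneg_left (sq_nonneg t)) (by positivity)

lemma tendsto_resolventWeight_atTop (t : ℝ) :
    Tendsto (fun y => resolventWeight y t) atTop (𝓝 1) := by
  have h : Tendsto (fun y : ℝ => (t ^ 2 * (y⁻¹) ^ 2 + 1)⁻¹) atTop (𝓝 1) := by
    simpa using ((tendsto_inv_atTop_zero.pow 2).const_mul (t ^ 2)).add_const 1 |>.inv₀ (by simp)
  refine h.congr' ?_
  filter_upwards [eventually_ne_atTop 0] with y hy
  unfold resolventWeight
  field_simp

lemma re_I_mul_mul_div_sub_I_mul (y t r : ℝ) :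
    (Complex.I * y * r / (t - Complex.I * y)).re = -(resolventWeight y t * r) := by
  rw [Complex.div_re]
  simp [Complex.normSq_apply, resolventWeight]
  ring_nf

lemma IsSelfAdjoint.smul_add_star_smul {A : Type*} [AddCommGroup A] [StarAddMonoid A] [Module ℂ A]
    [StarModule ℂ A] {a : A} (ha : IsSelfAdjoint a) (c : ℂ) :
    c • a + star (c • a) = (2 * c.re) • a := by
  rw [star_smul, ha.star_eq, ← add_smul, Complex.star_def, Complex.add_conj, ← Complex.coe_smul]

lemma abs_pow_le_pow_add_of_le {a t : ℝ} (h : a ≤ t) (m : ℕ) : |t ^ m| ≤ t ^ m + 2 * |a| ^ m := by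
  rcases le_or_gt 0 t with ht | ht
  · rw [abs_of_nonneg (pow_nonneg ht m)]
    linarith [pow_nonneg (abs_nonneg a) m]
  · have hta : |t| ≤ |a| := by rw [abs_of_neg ht, abs_of_nonpos (by linarith)]; linarith
    have := pow_le_pow_left₀ (abs_nonneg t) hta m
    rw [abs_pow]
    linarith [neg_abs_le (t ^ m), abs_pow t m]

lemma exists_ae_restrict_abs_pow_le {Ω : Set ℝ} (hΩ : BddBelow Ω ∨ BddAbove Ω) (τ : Measure ℝ)
    (m : ℕ) :
    ∃ ε C : ℝ, ∀ᵐ t ∂τ.restrict Ω, |t ^ m| ≤ ε * t ^ m + C := by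
  rcases hΩ with ⟨a, ha⟩ | ⟨b, hb⟩
  · refine ⟨1, 2 * |a| ^ m, ae_restrict_of_ae_restrict_of_subset ha
      (ae_restrict_of_forall_mem measurableSet_Ici fun t ht => ?_)⟩
    simpa using abs_pow_le_pow_add_of_le (Set.mem_Ici.mp ht) m
  · refine ⟨(-1) ^ m, 2 * |b| ^ m, ae_restrict_of_ae_restrict_of_subset hb
      (ae_restrict_of_forall_mem measurableSet_Iic fun t ht => ?_)⟩
    have := abs_pow_le_pow_add_of_le (neg_le_neg (Set.mem_Iic.mp ht)) m
    rwa [neg_pow, abs_mul, abs_neg_one_pow, one_mul, abs_neg] at this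

lemma integrable_of_tendsto_integral_weight_mul {μ : Measure ℝ} {w : ℕ → ℝ → ℝ} {h F : ℝ → ℝ}
    {ε L : ℝ} (hw0 : ∀ n t, 0 ≤ w n t) (hw1 : ∀ n t, w n t ≤ 1)
    (hw : ∀ t, Tendsto (fun n => w n t) atTop (𝓝 1)) (hF : Integrable F μ)
    (hh : ∀ᵐ t ∂μ, |h t| ≤ ε * h t + F t) (hwh : ∀ n, Integrable (fun t => w n t * h t) μ)
    (hlim : Tendsto (fun n => ∫ t, w n t * h t ∂μ) atTop (𝓝 L)) :
    Integrable h μ := by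
  obtain ⟨B, hB⟩ := (hlim.const_mul ε).bddAbove_range
  have hbound : ∀ n, ∫ t, |w n t * h t| ∂μ ≤ B + ∫ t, |F t| ∂μ := fun n => calc
    ∫ t, |w n t * h t| ∂μ ≤ ∫ t, (ε * (w n t * h t) + |F t|) ∂μ := by
      refine integral_mono_ae (hwh n).abs (((hwh n).const_mul ε).add hF.abs) ?_
      filter_upwards [hh] with t ht
      rw [abs_mul, abs_of_nonneg (hw0 n t)]
      nlinarith [hw0 n t, hw1 n t, le_abs_self (F t), abs_nonneg (F t)]
    _ = ε * ∫ t, w n t * h t ∂μ + ∫ t, |F t| ∂μ := by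
      rw [integral_add ((hwh n).const_mul ε) hF.abs, integral_const_mul]
    _ ≤ B + ∫ t, |F t| ∂μ := by gcongr; exact hB ⟨n, rfl⟩
  refine integrable_of_tendsto (G := fun n t => w n t * h t)
    (ae_of_all _ fun t => by simpa using (hw t).mul_const (h t))
    (fun n => (hwh n).aestronglyMeasurable)
    (ne_top_of_le_ne_top (ENNReal.ofReal_ne_top (r := B + ∫ t, |F t| ∂μ))
      (liminf_le_of_frequently_le' (Frequently.of_forall fun n => ?_)))
  rw [← ofReal_integral_norm_eq_lintegral_enorm (hwh n)]
  exact ENNReal.ofReal_le_ofReal (hbound n)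

lemma Matrix.PosSemidef.norm_apply_le {ι : Type*} [Fintype ι] {A : Matrix ι ι ℂ}
    (hA : A.PosSemidef) (i j : ι) : ‖A i j‖ ≤ ((A i i).re + (A j j).re) / 2 := by
  have hdet := (hA.submatrix ![i, j]).det_nonneg
  rw [det_fin_two] at hdet
  simp only [submatrix_apply, Matrix.cons_val_zero, Matrix.cons_val_one] at hdet
  have hji : A j i = star (A i j) := (hA.1.apply j i).symm
  have hii : 0 ≤ (A i i).re := (Complex.nonneg_iff.mp hA.diag_nonneg).1
  have hjj : 0 ≤ (A j j).re := (Complex.nonneg_iff.mp hA.diag_nonneg).1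
  have him_i : (A i i).im = 0 := (Complex.nonneg_iff.mp hA.diag_nonneg).2.symm
  have him_j : (A j j).im = 0 := (Complex.nonneg_iff.mp hA.diag_nonneg).2.symm
  have hsq : ‖A i j‖ ^ 2 ≤ (A i i).re * (A j j).re := by
    have := (Complex.nonneg_iff.mp hdet).1
    rw [hji, Complex.sub_re, Complex.mul_re, Complex.mul_re, him_i, him_j,
      ← Complex.normSq_eq_norm_sq, Complex.normSq_apply] at *
    simp only [Complex.star_def, Complex.conj_re, Complex.conj_im] at this
    nlinarith
  nlinarith [sq_nonneg ((A i i).re - (A j j).re), norm_nonneg (A i j)]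

lemma Matrix.PosSemidef.norm_le_sum_re_diag {ι : Type*} [Fintype ι] {A : Matrix ι ι ℂ}
    (hA : A.PosSemidef) : ‖A‖ ≤ ∑ i, (A i i).re := by
  have hdiag : ∀ i, 0 ≤ (A i i).re := fun i => (Complex.nonneg_iff.mp hA.diag_nonneg).1
  refine (Matrix.norm_le_iff (Finset.sum_nonneg fun i _ => hdiag i)).mpr fun i j => ?_
  have hle : ∀ k, (A k k).re ≤ ∑ i, (A i i).re := fun k =>
    Finset.single_le_sum (fun i _ => hdiag i) (Finset.mem_univ k)
  linarith [hA.norm_apply_le i j, hle i, hle j]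

section NormTopology

/- With the sup norm above, `ContinuousENorm (Matrix ι ι ℂ)`, hence `Integrable`, is only found
for the norm topology, which is not reducibly `instTopologicalSpaceMatrix`: use it here. -/
attribute [-instance] instTopologicalSpaceMatrix Matrix.instUniformSpace

variable {ι : Type*} [Fintype ι]

lemma integrable_and_tendsto_integral_resolventWeight_smul {μ : Measure ℝ}
    {D : ℝ → Matrix ι ι ℂ} (hD : ∀ t, (D t).IsHermitian) {m : ℕ} {S : Matrix ι ι ℂ}
    (hS : S.IsHermitian)
    (hint : ∀ y : ℝ, 0 < y → Integrable
      (fun t : ℝ => (Complex.I * y * (t : ℂ) ^ m / (t - Complex.I * y)) • D t) μ)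
    (hlim : Tendsto (fun y : ℝ =>
      ∫ t, (Complex.I * y * (t : ℂ) ^ m / (t - Complex.I * y)) • D t ∂μ) atTop (𝓝 (-S))) :
    (∀ y : ℝ, 0 < y → Integrable (fun t => resolventWeight y t • t ^ m • D t) μ) ∧
      Tendsto (fun y => ∫ t, resolventWeight y t • t ^ m • D t ∂μ) atTop (𝓝 S) := by
  have hpt : ∀ y t, resolventWeight y t • t ^ m • D t = -(2⁻¹ : ℝ) •
      ((Complex.I * y * (t : ℂ) ^ m / (t - Complex.I * y)) • D t
        + star ((Complex.I * y * (t : ℂ) ^ m / (t - Complex.I * y)) • D t)) := by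
    intro y t
    rw [(hD t).isSelfAdjoint.smul_add_star_smul, ← Complex.ofReal_pow,
      re_I_mul_mul_div_sub_I_mul, smul_smul, smul_smul]
    congr 1
    ring
  have hstar : ∀ y : ℝ, 0 < y → Integrable
      (fun t : ℝ => star ((Complex.I * y * (t : ℂ) ^ m / (t - Complex.I * y)) • D t)) μ :=
    fun y hy => (starL' ℝ : Matrix ι ι ℂ ≃L[ℝ] _).toContinuousLinearMap.integrable_comp
      (hint y hy)
  refine ⟨fun y hy => ?_, ?_⟩
  · simp_rw [hpt]
    exact ((hint y hy).add (hstar y hy)).smul (-(2⁻¹ : ℝ))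
  have hcont : Continuous fun A : Matrix ι ι ℂ => -(2⁻¹ : ℝ) • (A + star A) := by fun_prop
  have hS' : -(2⁻¹ : ℝ) • (-S + star (-S)) = S := by
    rw [star_neg, hS.isSelfAdjoint.star_eq, ← neg_add, smul_neg, neg_smul, neg_neg, ← two_smul ℝ,
      smul_smul, inv_mul_cancel₀ two_ne_zero, one_smul]
  refine hS' ▸ ((hcont.tendsto _).comp hlim).congr' ?_
  filter_upwards [eventually_gt_atTop 0] with y hy
  simp_rw [Function.comp_apply, hpt]
  rw [integral_smul, integral_add (hint y hy) (hstar y hy)]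
  congr 2
  exact ((starL' ℝ : Matrix ι ι ℂ ≃L[ℝ] _).integral_comp_comm _).symm

lemma integral_matrix_apply {μ : Measure ℝ} {F : ℝ → Matrix ι ι ℂ} (hF : Integrable F μ)
    (i j : ι) : (∫ t, F t ∂μ) i j = ∫ t, F t i j ∂μ :=
  (congrFun (eval_integral (fun k => hF.eval k) i) j).trans
    (eval_integral (fun k => (hF.eval i).eval k) j)

lemma integrable_smul_of_integrable_mul_re_diag {μ : Measure ℝ} {g : ℝ → ℝ}
    {D : ℝ → Matrix ι ι ℂ} (hD : ∀ t, (D t).PosSemidef)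
    (hmeas : AEStronglyMeasurable (fun t => g t • D t) μ)
    (hdiag : ∀ i, Integrable (fun t => g t * (D t i i).re) μ) :
    Integrable (fun t => g t • D t) μ := by
  refine (integrable_finsetSum Finset.univ fun i _ => (hdiag i).abs).mono' hmeas
    (ae_of_all _ fun t => ?_)
  calc ‖g t • D t‖ = |g t| * ‖D t‖ := by rw [norm_smul, Real.norm_eq_abs]
    _ ≤ |g t| * ∑ i, (D t i i).re := by gcongr; exact (hD t).norm_le_sum_re_diag
    _ = ∑ i, |g t * (D t i i).re| := by
      simp only [Finset.mul_sum, abs_mul,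
        abs_of_nonneg (Complex.nonneg_iff.mp (hD t).diag_nonneg).1]

lemma integrable_mul_re_diag_of_tendsto_weight {μ : Measure ℝ} {w : ℕ → ℝ → ℝ}
    (hw0 : ∀ n t, 0 ≤ w n t) (hw1 : ∀ n t, w n t ≤ 1)
    (hw : ∀ t, Tendsto (fun n => w n t) atTop (𝓝 1))
    {g : ℝ → ℝ} {D : ℝ → Matrix ι ι ℂ} {ε C : ℝ} {S : Matrix ι ι ℂ}
    (hD : ∀ t, (D t).PosSemidef) (hDint : Integrable D μ)
    (hg : ∀ᵐ t ∂μ, |g t| ≤ ε * g t + C)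
    (hwint : ∀ n, Integrable (fun t => w n t • g t • D t) μ)
    (hlim : Tendsto (fun n => ∫ t, w n t • g t • D t ∂μ) atTop (𝓝 S)) (i : ι) :
    Integrable (fun t => g t * (D t i i).re) μ := by
  have hentry : ∀ n, Integrable (fun t => ((w n t • g t • D t) i i).re) μ :=
    fun n => ((hwint n).eval i).eval i |>.re
  refine integrable_of_tendsto_integral_weight_mul (F := fun t => C * (D t i i).re)
    (ε := ε) (L := (S i i).re) hw0 hw1 hw (((hDint.eval i).eval i).re.const_mul C) ?_
    (fun n => (hentry n).congr (ae_of_all _ fun t => by simp)) ?_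
  · filter_upwards [hg] with t ht
    have hii : 0 ≤ (D t i i).re := (Complex.nonneg_iff.mp (hD t).diag_nonneg).1
    rw [abs_mul, abs_of_nonneg hii]
    nlinarith
  · refine (((Complex.continuous_re.comp (continuous_id.matrix_elem i i)).tendsto S).comp
      hlim).congr fun n => ?_
    change ((∫ t, w n t • g t • D t ∂μ) i i).re = _
    rw [integral_matrix_apply (hwint n), ← RCLike.re_to_complex,
      ← integral_re (((hwint n).eval i).eval i)]
    simp

lemma integrable_smul_and_integral_eq_of_tendsto_weight {μ : Measure ℝ} {w : ℕ → ℝ → ℝ}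
    (hw0 : ∀ n t, 0 ≤ w n t) (hw1 : ∀ n t, w n t ≤ 1)
    (hw : ∀ t, Tendsto (fun n => w n t) atTop (𝓝 1))
    {g : ℝ → ℝ} {D : ℝ → Matrix ι ι ℂ} {ε C : ℝ} {S : Matrix ι ι ℂ}
    (hD : ∀ t, (D t).PosSemidef) (hDint : Integrable D μ)
    (hg : ∀ᵐ t ∂μ, |g t| ≤ ε * g t + C)
    (hwint : ∀ n, Integrable (fun t => w n t • g t • D t) μ)
    (hlim : Tendsto (fun n => ∫ t, w n t • g t • D t ∂μ) atTop (𝓝 S)) :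
    Integrable (fun t => g t • D t) μ ∧ ∫ t, g t • D t ∂μ = S := by
  have hconv : ∀ t, Tendsto (fun n => w n t • g t • D t) atTop (𝓝 (g t • D t)) := fun t => by
    simpa using (hw t).smul_const (g t • D t)
  have hint : Integrable (fun t => g t • D t) μ :=
    integrable_smul_of_integrable_mul_re_diag hD
      (aestronglyMeasurable_of_tendsto_ae _ (fun n => (hwint n).aestronglyMeasurable)
        (ae_of_all _ hconv))
      (integrable_mul_re_diag_of_tendsto_weight hw0 hw1 hw hD hDint hg hwint hlim)
  refine ⟨hint, tendsto_nhds_unique ?_ hlim⟩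
  refine tendsto_integral_of_dominated_convergence (fun t => ‖g t • D t‖)
    (fun n => (hwint n).aestronglyMeasurable) hint.norm (fun n => ae_of_all _ fun t => ?_)
    (ae_of_all _ hconv)
  rw [norm_smul, Real.norm_eq_abs, abs_of_nonneg (hw0 n t)]
  exact mul_le_of_le_one_left (norm_nonneg _) (hw1 n t)

end NormTopology

theorem stmt15_general {q : ℕ} (m : ℕ)
    (Ω : Set ℝ)
    (hbdd : BddBelow Ω ∨ BddAbove Ω)
    (s : ℕ → Matrix (Fin q) (Fin q) ℂ) (hsm : (s m).IsHermitian)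
    (τ : Measure ℝ)
    (D : ℝ → Matrix (Fin q) (Fin q) ℂ)
    (hDpsd : ∀ t, (D t).PosSemidef)
    (hDint : @Integrable _ _ SeminormedAddGroup.toContinuousENorm _ _ D τ)
    (hint : ∀ j < m, @Integrable _ _ SeminormedAddGroup.toContinuousENorm _ _ (fun t : ℝ => t ^ j • D t) (τ.restrict Ω))
    (hmom : ∀ j < m, ∫ t in Ω, t ^ j • D t ∂τ = s j)
    (hlim : Tendsto (fun y : ℝ => (Complex.I * y) ^ (m + 1) •
          ((∫ t in Ω, ((t : ℂ) - Complex.I * y)⁻¹ • D t ∂τ) +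
            ∑ j ∈ Finset.range (m + 1), ((Complex.I * y) ^ (-(j + 1 : ℤ))) • s j))
        atTop (nhds 0)) :
    @Integrable _ _ SeminormedAddGroup.toContinuousENorm _ _ (fun t : ℝ => t ^ m • D t) (τ.restrict Ω) ∧
    ∫ t in Ω, t ^ m • D t ∂τ = s m := by
  have hexp : ∀ y : ℝ, 0 < y → _ := fun y hy =>
    integrable_and_integral_mul_pow_div_sub_smul hDint.restrict hint hmom (w := Complex.I * y)
      (by simpa using hy.ne')
  have hK : Tendsto (fun y : ℝ => ∫ t in Ω,
      (Complex.I * y * (t : ℂ) ^ m / (t - Complex.I * y)) • D t ∂τ) atTop (𝓝 (-s m)) := by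
    refine (zero_sub (s m) ▸ hlim.sub_const (s m)).congr' ?_
    filter_upwards [eventually_gt_atTop 0] with y hy
    rw [← (hexp y hy).2, add_sub_cancel_right]
  obtain ⟨hWint, hWlim⟩ := integrable_and_tendsto_integral_resolventWeight_smul
    (fun t => (hDpsd t).1) hsm (fun y hy => (hexp y hy).1) hK
  obtain ⟨ε, C, hbound⟩ := exists_ae_restrict_abs_pow_le hbdd τ m
  have hshift : Tendsto (fun n : ℕ => ((n + 1 : ℕ) : ℝ)) atTop atTop :=
    tendsto_natCast_atTop_atTop.comp (tendsto_add_atTop_nat 1)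
  exact integrable_smul_and_integral_eq_of_tendsto_weight
    (w := fun n t => resolventWeight (n + 1 : ℕ) t)
    (fun _ _ => resolventWeight_nonneg _ _) (fun _ _ => resolventWeight_le_one _ _)
    (fun t => (tendsto_resolventWeight_atTop t).comp hshift) hDpsd hDint.restrict hbound
    (fun n => hWint _ (by positivity)) (hWlim.comp hshift)

theorem stmt15 {q : ℕ} (m : ℕ) (hm : 1 ≤ m)
    (Ω : Set ℝ) (hclosed : IsClosed Ω) (hne : Ω.Nonempty)
    (hbdd : BddBelow Ω ∨ BddAbove Ω)
    (s : ℕ → Matrix (Fin q) (Fin q) ℂ) (hsm : (s m).IsHermitian)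
    (τ : Measure ℝ) [IsFiniteMeasure τ] (hτ : τ Ωᶜ = 0)
    (D : ℝ → Matrix (Fin q) (Fin q) ℂ)
    (hDmeas : ∀ i j, Measurable fun t => D t i j)
    (hDpsd : ∀ t, (D t).PosSemidef)
    (hDint : @Integrable _ _ SeminormedAddGroup.toContinuousENorm _ _ D τ)
    (hint : ∀ j < m, @Integrable _ _ SeminormedAddGroup.toContinuousENorm _ _ (fun t : ℝ => t ^ j • D t) (τ.restrict Ω))
    (hmom : ∀ j < m, ∫ t in Ω, t ^ j • D t ∂τ = s j)
    (hlim : Tendsto (fun y : ℝ => (Complex.I * y) ^ (m + 1) •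
          ((∫ t in Ω, ((t : ℂ) - Complex.I * y)⁻¹ • D t ∂τ) +
            ∑ j ∈ Finset.range (m + 1), ((Complex.I * y) ^ (-(j + 1 : ℤ))) • s j))
        atTop (nhds 0)) :
    @Integrable _ _ SeminormedAddGroup.toContinuousENorm _ _ (fun t : ℝ => t ^ m • D t) (τ.restrict Ω) ∧
    ∫ t in Ω, t ^ m • D t ∂τ = s m :=
  stmt15_general m Ω hbdd s hsm τ D hDpsd hDint hint hmom hlim
end
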